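/- Consider the consensus-voting group process on a convex compact set K ⊆ ℝ² with vol(K) = 1. Let f : K × K → [0,∞) be a measurable function satisfying f(w₁,w₂) ≤ min_{i∈{1,2}} vol(E_K(Hᵢ(w₁,w₂), H₍₃₋ᵢ₎(w₁,w₂))) for all w₁ ≠ w₂ in K (i.e. f lower-bounds, for each i, the one-round probability of accepting a candidate inside the Voronoi cell Hᵢ given that the convex hull of the group equals the opposite cell H₍₃₋ᵢ₎). Then for every t ≥ 1, Pr[X^{t+1}] ≤ 2 ∫_K ∫_K e^{−t·f(w₁,w₂)} dw₁ dw₂. -/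

import Mathlib

open MeasureTheory Metric Set
open scoped RealInnerProductSpace

noncomputable section

/-- Points of the plane (with the Euclidean norm). -/
abbrev Pt : Type := EuclideanSpace ℝ (Fin 2)

/-- The Voronoi cell of `w₁` (against competitor `w₂`) inside `K`. -/
def vcell (K : Set Pt) (w₁ w₂ : Pt) : Set Pt := {v ∈ K | dist v w₁ ≤ dist v w₂}

/-- The acceptance event `E_K(H, A)`: the set of candidate pairs `(w₁, w₂) ∈ K × K` such
that some candidate `wᵢ` lies in `H` and `A` is contained in its Voronoi cell, i.e. a
candidate inside `H` is accepted when the convex hull of the group is `A`. -/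
def accEvent (K H A : Set Pt) : Set (Pt × Pt) :=
  {p | p.1 ∈ K ∧ p.2 ∈ K ∧
    ((p.1 ∈ H ∧ A ⊆ vcell K p.1 p.2) ∨ (p.2 ∈ H ∧ A ⊆ vcell K p.2 p.1))}

/-- Every group member weakly prefers candidate `w₁` to candidate `w₂`. -/
def Accepts (G : Set Pt) (w₁ w₂ : Pt) : Prop := ∀ v ∈ G, dist v w₁ ≤ dist v w₂

open Classical in
/-- One round of the consensus-voting process: given the current group `G` and a pair of
candidates `c = (w₁, w₂)`, the unanimously preferred candidate (if any) joins the group. -/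
def step (G : Set Pt) (c : Pt × Pt) : Set Pt :=
  if Accepts G c.1 c.2 then insert c.1 G
  else if Accepts G c.2 c.1 then insert c.2 G
  else G

/-- The group after `t` rounds, from initial members `init` and candidate pairs `c`. -/
def grp {k : ℕ} (init : Fin k → Pt) (c : ℕ → Pt × Pt) : ℕ → Set Pt
  | 0 => Set.range init
  | t + 1 => step (grp init c t) (c t)

/-- Extend a `Fin T`-indexed sequence of candidate pairs to an `ℕ`-indexed one. -/
def extSeq {T : ℕ} (c : Fin T → Pt × Pt) : ℕ → Pt × Pt :=
  fun n => if h : n < T then c ⟨n, h⟩ else 0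

/-- The law of the randomness driving the first `T` rounds of the process: `k` i.i.d.
initial members with law `μ`, and `T` i.i.d. candidate pairs, each pair being two i.i.d.
points with law `μ`. -/
def procMeasure (μ : Measure Pt) (k T : ℕ) :
    Measure ((Fin k → Pt) × (Fin T → Pt × Pt)) :=
  (Measure.pi fun _ => μ).prod (Measure.pi fun _ => μ.prod μ)


/-!
If the group accepts `w₁` over `w₂` in round `t + 1`, it lies in the Voronoi cell of `w₁`. So
none of the first `t` pairs can have offered a candidate outside that cell which the whole cell
prefers (the event `escapeEvent K (w₁, w₂)`): that candidate would have joined the group. The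
only loophole is the tie-breaking of `step`, which needs an initial member equidistant from two
candidates and so has probability zero. Given the last pair `p`, the first `t` pairs are i.i.d.,
so this happens with probability at most `(1 - f p) ^ t ≤ exp (-t f p)`, because the escape
event differs from the acceptance event bounding `f` only by a bisector, a null set. The two
orientations of the last pair give the factor `2`.
-/

lemma IsCompact.isClosed_setOf_exists_mem {α X : Type*} [TopologicalSpace α]
    [TopologicalSpace X] {K : Set X} (hK : IsCompact K) {P : α → X → Prop}
    (hP : IsClosed {y : α × X | P y.1 y.2}) : IsClosed {x | ∃ v ∈ K, P x v} := by
  have : CompactSpace K := isCompact_iff_compactSpace.mp hK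
  have hPK : IsClosed {y : α × K | P y.1 y.2} :=
    hP.preimage (continuous_fst.prodMk (continuous_subtype_val.comp continuous_snd))
  convert isClosedMap_fst_of_compactSpace _ hPK using 1
  ext x
  exact ⟨fun ⟨v, hv, h⟩ => ⟨(x, ⟨v, hv⟩), h, rfl⟩, fun ⟨⟨_, v, hv⟩, h, hx⟩ => ⟨v, hv, hx ▸ h⟩⟩

lemma IsCompact.measurableSet_setOf_forall_mem_imp {α X : Type*} [TopologicalSpace α]
    [MeasurableSpace α] [OpensMeasurableSpace α] [TopologicalSpace X] {K : Set X}
    (hK : IsCompact K) {φ ψ : α → X → ℝ} (hφ : Continuous (Function.uncurry φ))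
    (hψ : Continuous (Function.uncurry ψ)) :
    MeasurableSet {x | ∀ v ∈ K, φ x v ≤ 0 → ψ x v ≤ 0} := by
  have hcompl : {x | ∀ v ∈ K, φ x v ≤ 0 → ψ x v ≤ 0}ᶜ =
      ⋃ n : ℕ, {x | ∃ v ∈ K, φ x v ≤ 0 ∧ 1 / ((n : ℝ) + 1) ≤ ψ x v} := by
    ext x
    simp only [mem_compl_iff, mem_ofPred_eq, mem_iUnion, not_forall, not_le, exists_prop]
    constructor
    · rintro ⟨v, hv, hφv, hψv⟩
      obtain ⟨n, hn⟩ := exists_nat_one_div_lt hψv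
      exact ⟨n, v, hv, hφv, hn.le⟩
    · rintro ⟨n, v, hv, hφv, hψv⟩
      exact ⟨v, hv, hφv, lt_of_lt_of_le Nat.one_div_pos_of_nat hψv⟩
  rw [← MeasurableSet.compl_iff, hcompl]
  exact MeasurableSet.iUnion fun n => (hK.isClosed_setOf_exists_mem
    (P := fun x v => φ x v ≤ 0 ∧ 1 / ((n : ℝ) + 1) ≤ ψ x v)
    ((isClosed_le hφ continuous_const).inter (isClosed_le continuous_const hψ))).measurableSet

def escapeEvent (K : Set Pt) (w : Pt × Pt) : Set (Pt × Pt) :=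
  accEvent K (K \ vcell K w.1 w.2) (vcell K w.1 w.2)

lemma vcell_subset_vcell_iff {K : Set Pt} {w₁ w₂ u₁ u₂ : Pt} :
    vcell K w₁ w₂ ⊆ vcell K u₁ u₂ ↔
      ∀ v ∈ K, dist v w₁ - dist v w₂ ≤ 0 → dist v u₁ - dist v u₂ ≤ 0 := by
  simp only [vcell, subset_def, mem_sep_iff, sub_nonpos]
  exact ⟨fun h v hv hw => (h v ⟨hv, hw⟩).2, fun h v hv => ⟨hv.1, h v hv.1 hv.2⟩⟩

lemma measurableSet_setOf_vcell_subset {α : Type*} [TopologicalSpace α] [MeasurableSpace α]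
    [OpensMeasurableSpace α] {K : Set Pt} (hK : IsCompact K) {w₁ w₂ u₁ u₂ : α → Pt}
    (hw₁ : Continuous w₁) (hw₂ : Continuous w₂) (hu₁ : Continuous u₁) (hu₂ : Continuous u₂) :
    MeasurableSet {x | vcell K (w₁ x) (w₂ x) ⊆ vcell K (u₁ x) (u₂ x)} := by
  simp only [vcell_subset_vcell_iff]
  exact hK.measurableSet_setOf_forall_mem_imp (by fun_prop) (by fun_prop)

lemma measurableSet_setOf_mem_escapeEvent {K : Set Pt} (hK : IsCompact K) :
    MeasurableSet {x : (Pt × Pt) × (Pt × Pt) | x.2 ∈ escapeEvent K x.1} := by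
  have hKm : MeasurableSet K := hK.isClosed.measurableSet
  have hmemK : ∀ {u : (Pt × Pt) × (Pt × Pt) → Pt}, Continuous u → Measurable fun x => u x ∈ K :=
    fun hu => measurableSet_setOfPred.1 (hKm.preimage hu.measurable)
  have hwins : ∀ {u u' : (Pt × Pt) × (Pt × Pt) → Pt}, Continuous u → Continuous u' →
      Measurable fun x => u x ∈ K \ vcell K x.1.1 x.1.2 ∧
        vcell K x.1.1 x.1.2 ⊆ vcell K (u x) (u' x) := by
    intro u u' hu hu'
    have hcell : Measurable fun x => u x ∈ vcell K x.1.1 x.1.2 :=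
      measurableSet_setOfPred.1 ((hKm.preimage hu.measurable).inter
        (measurableSet_le (hu.dist (by fun_prop)).measurable (hu.dist (by fun_prop)).measurable))
    exact ((hmemK hu).and hcell.not).and (measurableSet_setOfPred.1
      (measurableSet_setOf_vcell_subset hK (by fun_prop) (by fun_prop) hu hu'))
  exact measurableSet_setOfPred.2 ((hmemK (by fun_prop)).and ((hmemK (by fun_prop)).and
    ((hwins (by fun_prop) (by fun_prop)).or (hwins (by fun_prop) (by fun_prop)))))

lemma MeasureTheory.Measure.ae_prod_apply_ne {X Y : Type*} [MeasurableSpace X] [MeasurableSpace Y]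
    [MeasurableEq Y] {μ : Measure X} [SFinite μ] {g : X → Y} (hg : Measurable g)
    (h : ∀ y, μ (g ⁻¹' {y}) = 0) : ∀ᵐ q ∂μ.prod μ, g q.1 ≠ g q.2 := by
  rw [Measure.ae_prod_iff_ae_ae (p := fun q => g q.1 ≠ g q.2)
    (measurableSet_eq_fun (hg.comp measurable_fst) (hg.comp measurable_snd)).compl]
  exact ae_of_all _ fun x => (measure_eq_zero_iff_ae_notMem.1 (h (g x))).mono fun _ hy => Ne.symm hy

lemma volume_setOf_dist_eq_dist {w₁ w₂ : Pt} (hne : w₁ ≠ w₂) :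
    volume {v : Pt | dist v w₁ = dist v w₂} = 0 := by
  have hbis : {v : Pt | dist v w₁ = dist v w₂} = AffineSubspace.perpBisector w₁ w₂ := by
    ext v
    exact AffineSubspace.mem_perpBisector_iff_dist_eq.symm
  rw [hbis]
  exact Measure.addHaar_affineSubspace _ _ (by simpa using hne)

lemma volume_prod_univ_union_univ_prod {N : Set Pt} (hN : volume N = 0) :
    volume (N ×ˢ univ ∪ univ ×ˢ N) = 0 := by
  rw [Measure.volume_eq_prod]
  refine measure_union_null ?_ ?_ <;> simp [Measure.prod_prod, hN]

lemma accEvent_subset_prod (K H A : Set Pt) : accEvent K H A ⊆ K ×ˢ K :=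
  fun _ hq => ⟨hq.1, hq.2.1⟩

lemma accEvent_subset_union (K H H' A : Set Pt) :
    accEvent K H A ⊆ accEvent K H' A ∪ ((H \ H') ×ˢ univ ∪ univ ×ˢ (H \ H')) := by
  rintro q ⟨hq₁, hq₂, ⟨hH, hA⟩ | ⟨hH, hA⟩⟩
  · by_cases hH' : q.1 ∈ H'
    · exact .inl ⟨hq₁, hq₂, .inl ⟨hH', hA⟩⟩
    · exact .inr (.inl ⟨⟨hH, hH'⟩, mem_univ _⟩)
  · by_cases hH' : q.2 ∈ H'
    · exact .inl ⟨hq₁, hq₂, .inr ⟨hH', hA⟩⟩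
    · exact .inr (.inr ⟨mem_univ _, hH, hH'⟩)

lemma volume_accEvent_le_volume_escapeEvent {K : Set Pt} {w₁ w₂ : Pt} (hne : w₁ ≠ w₂) :
    volume (accEvent K (vcell K w₂ w₁) (vcell K w₁ w₂)) ≤ volume (escapeEvent K (w₁, w₂)) := by
  have hdiff : vcell K w₂ w₁ \ (K \ vcell K w₁ w₂) ⊆ {v | dist v w₁ = dist v w₂} := by
    rintro v ⟨⟨hvK, hv₂⟩, hv₁⟩
    exact le_antisymm (not_not.1 fun h => hv₁ ⟨hvK, fun h' => h h'.2⟩) hv₂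
  have hnull := volume_prod_univ_union_univ_prod
    (measure_mono_null hdiff (volume_setOf_dist_eq_dist hne))
  calc volume (accEvent K (vcell K w₂ w₁) (vcell K w₁ w₂))
      ≤ volume (escapeEvent K (w₁, w₂) ∪ _) := measure_mono (accEvent_subset_union _ _ _ _)
    _ ≤ volume (escapeEvent K (w₁, w₂)) + _ := measure_union_le _ _
    _ = volume (escapeEvent K (w₁, w₂)) := by rw [hnull, add_zero]

lemma subset_step (G : Set Pt) (q : Pt × Pt) : G ⊆ step G q := by
  unfold step
  split_ifs
  exacts [subset_insert _ _, subset_insert _ _, subset_rfl]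

lemma step_subset_insert_insert (G : Set Pt) (q : Pt × Pt) :
    step G q ⊆ insert q.1 (insert q.2 G) := by
  unfold step
  split_ifs
  · exact insert_subset_insert (subset_insert _ _)
  · exact (insert_subset_insert subset_rfl).trans (subset_insert _ _)
  · exact (subset_insert _ _).trans (subset_insert _ _)

section ConsensusVoting

variable {K : Set Pt} {k : ℕ} {a : Fin k → Pt} {c : ℕ → Pt × Pt}

lemma grp_monotone : Monotone (grp a c) :=
  monotone_nat_of_le_succ fun n => subset_step (grp a c n) (c n)

lemma grp_subset (ha : ∀ i, a i ∈ K) {t : ℕ} (hc : ∀ n < t, c n ∈ K ×ˢ K) :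
    grp a c t ⊆ K := by
  induction t with
  | zero => exact range_subset_iff.2 ha
  | succ n ih =>
    obtain ⟨hc₁, hc₂⟩ := hc n n.lt_succ_self
    exact (step_subset_insert_insert _ _).trans
      (insert_subset hc₁ (insert_subset hc₂ (ih fun m hm => hc m (hm.trans n.lt_succ_self))))

lemma step_inter_nonempty_of_mem_accEvent {G H A : Set Pt} {q : Pt × Pt} (hGA : G ⊆ A)
    (hq : q ∈ accEvent K H A) :
    (step G q ∩ H).Nonempty ∨ ∀ v ∈ G, dist v q.1 = dist v q.2 := by
  obtain ⟨-, -, ⟨hH, hA⟩ | ⟨hH, hA⟩⟩ := hq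
  · have hacc : Accepts G q.1 q.2 := fun v hv => (hA (hGA hv)).2
    left
    exact ⟨q.1, by simp only [step, if_pos hacc, mem_insert], hH⟩
  · have hacc : Accepts G q.2 q.1 := fun v hv => (hA (hGA hv)).2
    by_cases hacc' : Accepts G q.1 q.2
    · exact .inr fun v hv => le_antisymm (hacc' v hv) (hacc v hv)
    · left
      exact ⟨q.2, by simp only [step, if_neg hacc', if_pos hacc, mem_insert], hH⟩

lemma notMem_escapeEvent_of_accepts {t s : ℕ} {w : Pt × Pt} (hGK : grp a c t ⊆ K)
    (hacc : Accepts (grp a c t) w.1 w.2) (hs : s < t) {i : Fin k}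
    (htie : dist (a i) (c s).1 ≠ dist (a i) (c s).2) : c s ∉ escapeEvent K w := by
  intro hq
  have hcell : grp a c t ⊆ vcell K w.1 w.2 := fun v hv => ⟨hGK hv, hacc v hv⟩
  rcases step_inter_nonempty_of_mem_accEvent ((grp_monotone hs.le).trans hcell) hq with
    ⟨v, hv, hvK, hvcell⟩ | hties
  · exact hvcell (hcell (grp_monotone hs hv))
  · exact htie (hties _ (grp_monotone (Nat.zero_le s) (mem_range_self i)))

end ConsensusVoting

lemma extSeq_of_lt {T : ℕ} (c : Fin T → Pt × Pt) {n : ℕ} (h : n < T) :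
    extSeq c n = c ⟨n, h⟩ :=
  dif_pos h

lemma forall_castSucc_notMem_escapeEvent_of_accepts {K : Set Pt} {k t : ℕ} {a : Fin k → Pt}
    {c : Fin (t + 1) → Pt × Pt} (ha : ∀ i, a i ∈ K) (hc : ∀ n, c n ∈ K ×ˢ K) {i : Fin k}
    (hties : ∀ n, dist (a i) (c n).1 ≠ dist (a i) (c n).2) {w : Pt × Pt}
    (hacc : Accepts (grp a (extSeq c) t) w.1 w.2) (s : Fin t) :
    c s.castSucc ∉ escapeEvent K w := by
  have hGK : grp a (extSeq c) t ⊆ K :=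
    grp_subset ha fun n hn => extSeq_of_lt c (hn.trans t.lt_succ_self) ▸ hc _
  have h := notMem_escapeEvent_of_accepts hGK hacc s.isLt (i := i)
  rw [extSeq_of_lt c (s.isLt.trans t.lt_succ_self)] at h
  exact h (hties _)

lemma one_sub_ofReal_pow_le_ofReal_exp (x : ℝ) (t : ℕ) :
    (1 - ENNReal.ofReal x) ^ t ≤ ENNReal.ofReal (Real.exp (-t * x)) := by
  have hle : 1 - ENNReal.ofReal x ≤ ENNReal.ofReal (Real.exp (-x)) := by
    rcases le_total x 0 with hx | hx
    · rw [ENNReal.ofReal_of_nonpos hx, tsub_zero, ENNReal.one_le_ofReal]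
      exact Real.one_le_exp (neg_nonneg.2 hx)
    · rw [← ENNReal.ofReal_one, ← ENNReal.ofReal_sub _ hx]
      exact ENNReal.ofReal_le_ofReal (Real.one_sub_le_exp_neg x)
  calc (1 - ENNReal.ofReal x) ^ t ≤ ENNReal.ofReal (Real.exp (-x)) ^ t := pow_le_pow_left' hle t
    _ = ENNReal.ofReal (Real.exp (-t * x)) := by
      rw [← ENNReal.ofReal_pow (Real.exp_pos _).le, ← Real.exp_nat_mul, mul_neg, neg_mul]

section Avoidance

variable {α : Type*} [MeasurableSpace α]

lemma measure_pi_setOf_forall_castSucc_mem (ν : Measure α) [SigmaFinite ν]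
    {V : Set (α × α)} (hV : MeasurableSet V) (t : ℕ) :
    Measure.pi (fun _ : Fin (t + 1) => ν)
        {c | ∀ s : Fin t, (c (Fin.last t), c s.castSucc) ∈ V} =
      ∫⁻ p, ν (Prod.mk p ⁻¹' V) ^ t ∂ν := by
  set W := {x : α × (Fin t → α) | ∀ s, (x.1, x.2 s) ∈ V}
  have hW : MeasurableSet W := by
    simp only [W, ofPred_forall]
    exact .iInter fun s => hV.preimage (by fun_prop)
  have hslice : ∀ p, Prod.mk p ⁻¹' W = univ.pi fun _ => Prod.mk p ⁻¹' V := fun p => by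
    ext c
    simp [W]
  calc Measure.pi (fun _ : Fin (t + 1) => ν) {c | ∀ s : Fin t, (c (Fin.last t), c s.castSucc) ∈ V}
      = Measure.pi (fun _ : Fin (t + 1) => ν)
          (MeasurableEquiv.piFinSuccAbove (fun _ => α) (Fin.last t) ⁻¹' W) := by
        congr 1
        ext c
        simp [W, Fin.init]
    _ = (ν.prod (Measure.pi fun _ : Fin t => ν)) W :=
        (measurePreserving_piFinSuccAbove _ (Fin.last t)).measure_preimage hW.nullMeasurableSet
    _ = ∫⁻ p, ν (Prod.mk p ⁻¹' V) ^ t ∂ν := by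
        simp only [Measure.prod_apply hW, hslice, Measure.pi_pi, Finset.prod_const,
          Finset.card_univ, Fintype.card_fin]

lemma measure_pi_setOf_forall_castSucc_notMem_le (ν : Measure α) [IsProbabilityMeasure ν]
    {E : α → Set α} (hE : MeasurableSet {x : α × α | x.2 ∈ E x.1}) {F : α → ℝ}
    (hF : ∀ᵐ p ∂ν, ENNReal.ofReal (F p) ≤ ν (E p)) (t : ℕ) :
    Measure.pi (fun _ : Fin (t + 1) => ν) {c | ∀ s : Fin t, c s.castSucc ∉ E (c (Fin.last t))} ≤
      ∫⁻ p, ENNReal.ofReal (Real.exp (-t * F p)) ∂ν := by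
  refine (measure_pi_setOf_forall_castSucc_mem ν hE.compl t).trans_le ?_
  refine lintegral_mono_ae (hF.mono fun p hp => ?_)
  have hEp : MeasurableSet (E p) := hE.preimage measurable_prodMk_left
  calc ν (Prod.mk p ⁻¹' {x | x.2 ∈ E x.1}ᶜ) ^ t = (1 - ν (E p)) ^ t := by
        rw [← prob_compl_eq_one_sub hEp]
        rfl
    _ ≤ (1 - ENNReal.ofReal (F p)) ^ t := by gcongr
    _ ≤ ENNReal.ofReal (Real.exp (-t * F p)) := one_sub_ofReal_pow_le_ofReal_exp _ _

end Avoidance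

lemma ae_procMeasure_mem_and_dist_ne {K : Set Pt} (hK : MeasurableSet K)
    [IsProbabilityMeasure (volume.restrict K)] (k T : ℕ) :
    ∀ᵐ ω ∂procMeasure (volume.restrict K) k T, (∀ i, ω.1 i ∈ K) ∧ (∀ n, ω.2 n ∈ K ×ˢ K) ∧
      ∀ i n, dist (ω.1 i) (ω.2 n).1 ≠ dist (ω.1 i) (ω.2 n).2 := by
  set μ := volume.restrict K
  have hμ : ∀ᵐ v ∂μ, v ∈ K := ae_restrict_mem hK
  have hν : ∀ᵐ q ∂μ.prod μ, q ∈ K ×ˢ K :=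
    (measurePreserving_fst.quasiMeasurePreserving.ae hμ).and
      (measurePreserving_snd.quasiMeasurePreserving.ae hμ)
  have hsphere : ∀ v r, μ ((fun y => dist v y) ⁻¹' {r}) = 0 := fun v r => by
    refine nonpos_iff_eq_zero.1 ((Measure.restrict_apply_le _ _).trans_eq ?_)
    convert Measure.addHaar_sphere volume v r using 2
    ext y
    exact mem_sphere'.symm
  have hties : ∀ᵐ x ∂μ.prod (μ.prod μ), dist x.1 x.2.1 ≠ dist x.1 x.2.2 := by
    rw [Measure.ae_prod_iff_ae_ae (p := fun x : Pt × (Pt × Pt) => dist x.1 x.2.1 ≠ dist x.1 x.2.2)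
      (isOpen_ne_fun (by fun_prop) (by fun_prop)).measurableSet]
    exact ae_of_all _ fun v => Measure.ae_prod_apply_ne (by fun_prop) (hsphere v)
  refine (measurePreserving_fst.quasiMeasurePreserving.ae (ae_all_iff.2 fun i =>
      (measurePreserving_eval _ i).quasiMeasurePreserving.ae hμ)).and
    ((measurePreserving_snd.quasiMeasurePreserving.ae (ae_all_iff.2 fun n =>
      (measurePreserving_eval _ n).quasiMeasurePreserving.ae hν)).and
    (ae_all_iff.2 fun i => ae_all_iff.2 fun n =>
      ((measurePreserving_eval (fun _ => μ) i).prod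
        (measurePreserving_eval (fun _ => μ.prod μ) n)).quasiMeasurePreserving.ae
        hties))

/-- `σ` is `id` or `Prod.swap`, according to which candidate of the last pair is accepted. -/
def noEscape (K : Set Pt) (t : ℕ) (σ : Pt × Pt → Pt × Pt) : Set (Fin (t + 1) → Pt × Pt) :=
  {c | ∀ s : Fin t, c s.castSucc ∉ escapeEvent K (σ (c (Fin.last t)))}

lemma ae_accepts_imp_mem_noEscape {K : Set Pt} (hK : MeasurableSet K)
    [IsProbabilityMeasure (volume.restrict K)] {k : ℕ} (hk : 1 ≤ k) (t : ℕ) :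
    ∀ᵐ ω ∂procMeasure (volume.restrict K) k (t + 1),
      Accepts (grp ω.1 (extSeq ω.2) t) (extSeq ω.2 t).1 (extSeq ω.2 t).2 ∨
        Accepts (grp ω.1 (extSeq ω.2) t) (extSeq ω.2 t).2 (extSeq ω.2 t).1 →
      ω.2 ∈ noEscape K t id ∪ noEscape K t Prod.swap := by
  filter_upwards [ae_procMeasure_mem_and_dist_ne hK k (t + 1)] with ω ⟨ha, hc, hties⟩ hacc
  rw [extSeq_of_lt ω.2 t.lt_succ_self] at hacc
  exact hacc.imp (forall_castSucc_notMem_escapeEvent_of_accepts ha hc (hties ⟨0, hk⟩))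
    (forall_castSucc_notMem_escapeEvent_of_accepts ha hc (hties ⟨0, hk⟩))

lemma measure_noEscape_le {K : Set Pt} (hK : IsCompact K) (ν : Measure (Pt × Pt))
    [IsProbabilityMeasure ν] {σ : Pt × Pt → Pt × Pt} (hσ : Measurable σ) {F : Pt × Pt → ℝ}
    (hF : ∀ᵐ p ∂ν, ENNReal.ofReal (F p) ≤ ν (escapeEvent K (σ p))) (t : ℕ) :
    Measure.pi (fun _ : Fin (t + 1) => ν) (noEscape K t σ) ≤
      ∫⁻ p, ENNReal.ofReal (Real.exp (-t * F p)) ∂ν :=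
  measure_pi_setOf_forall_castSucc_notMem_le ν (E := fun p => escapeEvent K (σ p))
    ((measurableSet_setOf_mem_escapeEvent hK).preimage
    (f := fun x : (Pt × Pt) × (Pt × Pt) => (σ x.1, x.2)) (by fun_prop)) hF t

lemma ae_ofReal_le_measure_escapeEvent {K : Set Pt} (hK : MeasurableSet K) {F : Pt × Pt → ℝ}
    (hF : ∀ w₁ ∈ K, ∀ w₂ ∈ K, w₁ ≠ w₂ →
      ENNReal.ofReal (F (w₁, w₂)) ≤ volume (accEvent K (vcell K w₁ w₂) (vcell K w₂ w₁)) ∧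
        ENNReal.ofReal (F (w₁, w₂)) ≤ volume (accEvent K (vcell K w₂ w₁) (vcell K w₁ w₂))) :
    ∀ᵐ p ∂volume.restrict (K ×ˢ K),
      ENNReal.ofReal (F p) ≤ volume.restrict (K ×ˢ K) (escapeEvent K p) ∧
        ENNReal.ofReal (F p) ≤ volume.restrict (K ×ˢ K) (escapeEvent K p.swap) := by
  have hdiag : ∀ᵐ p : Pt × Pt, p.1 ≠ p.2 := by
    rw [Measure.volume_eq_prod]
    exact Measure.ae_prod_apply_ne measurable_id measure_singleton
  have hsub : ∀ w, escapeEvent K w ⊆ K ×ˢ K := fun _ => accEvent_subset_prod _ _ _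
  filter_upwards [ae_restrict_mem (hK.prod hK), ae_restrict_of_ae hdiag] with p hpK hne
  obtain ⟨hF₁, hF₂⟩ := hF p.1 hpK.1 p.2 hpK.2 hne
  rw [Measure.restrict_eq_self _ (hsub p), Measure.restrict_eq_self _ (hsub p.swap)]
  exact ⟨hF₂.trans (volume_accEvent_le_volume_escapeEvent hne),
    hF₁.trans (volume_accEvent_le_volume_escapeEvent hne.symm)⟩

theorem prob_accept_le_two_mul_integral_exp_general
    (K : Set Pt) (hKcomp : IsCompact K) (hKvol : volume K = 1)
    (f : Pt × Pt → ℝ)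
    (hf : ∀ w₁ ∈ K, ∀ w₂ ∈ K, w₁ ≠ w₂ →
      ENNReal.ofReal (f (w₁, w₂)) ≤
          volume (accEvent K (vcell K w₁ w₂) (vcell K w₂ w₁)) ∧
        ENNReal.ofReal (f (w₁, w₂)) ≤
          volume (accEvent K (vcell K w₂ w₁) (vcell K w₁ w₂)))
    (k : ℕ) (hk : 1 ≤ k) (t : ℕ) :
    procMeasure (volume.restrict K) k (t + 1)
        {ω | Accepts (grp ω.1 (extSeq ω.2) t) (extSeq ω.2 t).1 (extSeq ω.2 t).2 ∨
             Accepts (grp ω.1 (extSeq ω.2) t) (extSeq ω.2 t).2 (extSeq ω.2 t).1}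
      ≤ 2 * ∫⁻ p in K ×ˢ K, ENNReal.ofReal (Real.exp (-(t : ℝ) * f p)) := by
  have hKm : MeasurableSet K := hKcomp.isClosed.measurableSet
  have : IsProbabilityMeasure (volume.restrict K) := ⟨by rwa [Measure.restrict_apply_univ]⟩
  have hν : (volume.restrict K).prod (volume.restrict K) = volume.restrict (K ×ˢ K) := by
    rw [Measure.prod_restrict, Measure.volume_eq_prod]
  have : IsProbabilityMeasure (volume.restrict (K ×ˢ K)) := hν ▸ inferInstance
  have hf_le := ae_ofReal_le_measure_escapeEvent hKm hf
  calc _ ≤ procMeasure (volume.restrict K) k (t + 1)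
          (Prod.snd ⁻¹' (noEscape K t id ∪ noEscape K t Prod.swap)) :=
        measure_mono_ae (ae_accepts_imp_mem_noEscape hKm hk t)
    _ ≤ Measure.pi (fun _ : Fin (t + 1) => volume.restrict (K ×ˢ K)) (noEscape K t id) +
        Measure.pi (fun _ : Fin (t + 1) => volume.restrict (K ×ˢ K)) (noEscape K t Prod.swap) := by
      rw [← univ_prod, procMeasure, Measure.prod_prod, measure_univ, one_mul, hν]
      exact measure_union_le _ _
    _ ≤ (∫⁻ p in K ×ˢ K, ENNReal.ofReal (Real.exp (-t * f p))) +
        ∫⁻ p in K ×ˢ K, ENNReal.ofReal (Real.exp (-t * f p)) :=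
      add_le_add (measure_noEscape_le hKcomp _ measurable_id (hf_le.mono fun _ => And.left) t)
        (measure_noEscape_le hKcomp _ measurable_swap (hf_le.mono fun _ => And.right) t)
    _ = _ := (two_mul _).symm

/-- For the consensus-voting process on a convex compact `K ⊆ ℝ²` of
volume `1`: if a measurable nonnegative `f` satisfies
`f (w₁, w₂) ≤ min_{i} vol (E_K(Hᵢ(w₁,w₂), H₍₃₋ᵢ₎(w₁,w₂)))` for all `w₁ ≠ w₂` in `K`, then
the probability `Pr[X^{t+1}]` that a candidate is accepted in round `t+1` is at most
`2 ∫_K ∫_K e^{−t·f(w₁,w₂)} dw₁ dw₂`. -/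
theorem prob_accept_le_two_mul_integral_exp
    (K : Set Pt) (hK : Convex ℝ K) (hKcomp : IsCompact K) (hKvol : volume K = 1)
    (f : Pt × Pt → ℝ) (hfmeas : Measurable f) (hfnonneg : ∀ p, 0 ≤ f p)
    (hf : ∀ w₁ ∈ K, ∀ w₂ ∈ K, w₁ ≠ w₂ →
      ENNReal.ofReal (f (w₁, w₂)) ≤
          volume (accEvent K (vcell K w₁ w₂) (vcell K w₂ w₁)) ∧
        ENNReal.ofReal (f (w₁, w₂)) ≤
          volume (accEvent K (vcell K w₂ w₁) (vcell K w₁ w₂)))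
    (k : ℕ) (hk : 1 ≤ k) (t : ℕ) (ht : 1 ≤ t) :
    procMeasure (volume.restrict K) k (t + 1)
        {ω | Accepts (grp ω.1 (extSeq ω.2) t) (extSeq ω.2 t).1 (extSeq ω.2 t).2 ∨
             Accepts (grp ω.1 (extSeq ω.2) t) (extSeq ω.2 t).2 (extSeq ω.2 t).1}
      ≤ 2 * ∫⁻ p in K ×ˢ K, ENNReal.ofReal (Real.exp (-(t : ℝ) * f p)) :=
  prob_accept_le_two_mul_integral_exp_general K hKcomp hKvol f hf k hk t

end
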